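/- Let G : ℝ² → ℝ³ be the Gauss map of the catenoid, G(t,u) = (cos t / cosh u, sin t / cosh u, −tanh u). Then the image of G is exactly the unit sphere minus the two poles: {G(t,u) : (t,u) ∈ ℝ²} = {x ∈ ℝ³ : ‖x‖ = 1} \ {(0,0,1), (0,0,−1)}. In particular the Gauss map of the catenoid omits exactly two (antipodal) points of the sphere. -/

import Mathlib

noncomputable section

/-- The space `ℝ³` with the Euclidean norm. -/
abbrev E3 := EuclideanSpace ℝ (Fin 3)

/-- The Gauss map of the catenoid,
`G(t,u) = (cos t / cosh u, sin t / cosh u, −tanh u)`. -/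
def catG (p : ℝ × ℝ) : E3 :=
  WithLp.toLp 2 ![Real.cos p.1 / Real.cosh p.2, Real.sin p.1 / Real.cosh p.2, -Real.tanh p.2]

/-!
Since `(cosh u)⁻¹ ^ 2 + tanh u ^ 2 = 1`, the Gauss map lands on the unit sphere, and its last
coordinate `-tanh u` lies strictly between `-1` and `1`, which rules out exactly the two poles.
Conversely, a point `x` of the sphere with `x₂ ^ 2 < 1` is `G(t, u)` for `u = artanh (-x₂)`,
for which `(cosh u)⁻¹ = √(1 - x₂ ^ 2) = √(x₀ ^ 2 + x₁ ^ 2)`, and `t` a polar angle of `(x₀, x₁)`.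
-/

open Real

lemma Real.inv_cosh_sq_add_tanh_sq (u : ℝ) : (cosh u)⁻¹ ^ 2 + tanh u ^ 2 = 1 := by
  have := cosh_pos u
  rw [tanh_eq_sinh_div_cosh]
  field_simp
  linarith [cosh_sq u]

lemma Real.exists_polar_angle (a b : ℝ) :
    ∃ t, √(a ^ 2 + b ^ 2) * cos t = a ∧ √(a ^ 2 + b ^ 2) * sin t = b := by
  have hnorm : ‖(⟨a, b⟩ : ℂ)‖ = √(a ^ 2 + b ^ 2) := by
    rw [Complex.norm_def, Complex.normSq_mk]; ring_nf
  exact ⟨Complex.arg ⟨a, b⟩, by rw [← hnorm, Complex.norm_mul_cos_arg],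
    by rw [← hnorm, Complex.norm_mul_sin_arg]⟩

lemma EuclideanSpace.eq_toLp_fin_three_iff {𝕜 : Type*} [RCLike 𝕜] (x : EuclideanSpace 𝕜 (Fin 3))
    (a b c : 𝕜) : x = WithLp.toLp 2 ![a, b, c] ↔ x 0 = a ∧ x 1 = b ∧ x 2 = c := by
  constructor
  · rintro rfl
    simp
  · rintro ⟨h0, h1, h2⟩
    ext i
    fin_cases i <;> simp [h0, h1, h2]

lemma EuclideanSpace.norm_fin_three_eq_one_iff (x : EuclideanSpace ℝ (Fin 3)) :
    ‖x‖ = 1 ↔ x 0 ^ 2 + x 1 ^ 2 + x 2 ^ 2 = 1 := by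
  rw [EuclideanSpace.norm_eq, Real.sqrt_eq_one, Fin.sum_univ_three]
  simp only [Real.norm_eq_abs, sq_abs]

lemma sphere_diff_poles_eq :
    {x : E3 | ‖x‖ = 1} \ {(WithLp.toLp 2 ![0, 0, 1] : E3), (WithLp.toLp 2 ![0, 0, -1] : E3)} =
      {x : E3 | x 0 ^ 2 + x 1 ^ 2 + x 2 ^ 2 = 1 ∧ x 2 ^ 2 < 1} := by
  ext x
  simp only [Set.mem_sdiff, Set.mem_ofPred_eq, Set.mem_insert_iff, Set.mem_singleton_iff,
    EuclideanSpace.norm_fin_three_eq_one_iff, EuclideanSpace.eq_toLp_fin_three_iff]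
  refine and_congr_right fun hx => ?_
  constructor
  · intro hnot
    by_contra! hx2
    have hx01 : x 0 ^ 2 + x 1 ^ 2 = 0 := by nlinarith [sq_nonneg (x 0), sq_nonneg (x 1)]
    obtain ⟨hx0, hx1⟩ := (add_eq_zero_iff_of_nonneg (sq_nonneg _) (sq_nonneg _)).mp hx01
    rw [sq_eq_zero_iff] at hx0 hx1
    have hx2' : x 2 = 1 ∨ x 2 = -1 := sq_eq_one_iff.mp (by linarith)
    exact hnot (hx2'.imp (fun h => ⟨hx0, hx1, h⟩) fun h => ⟨hx0, hx1, h⟩)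
  · rintro hx2 (⟨-, -, h⟩ | ⟨-, -, h⟩) <;> simp [h] at hx2

lemma range_catG : Set.range catG = {x : E3 | x 0 ^ 2 + x 1 ^ 2 + x 2 ^ 2 = 1 ∧ x 2 ^ 2 < 1} := by
  ext x
  constructor
  · rintro ⟨⟨t, u⟩, rfl⟩
    simp only [catG, Set.mem_ofPred_eq, Matrix.cons_val_zero, Matrix.cons_val_one,
      Matrix.cons_val_two, Matrix.head_cons, Matrix.tail_cons, neg_sq]
    refine ⟨?_, tanh_sq_lt_one u⟩
    rw [div_eq_mul_inv, div_eq_mul_inv, mul_pow, mul_pow, ← add_mul, cos_sq_add_sin_sq, one_mul,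
      inv_cosh_sq_add_tanh_sq]
  · rintro ⟨hsphere, hx2⟩
    have hx2_mem : -x 2 ∈ Set.Ioo (-1) 1 := by
      obtain ⟨hlo, hhi⟩ := abs_lt.mp ((sq_lt_one_iff_abs_lt_one _).mp hx2)
      constructor <;> linarith
    set u := artanh (-x 2)
    obtain ⟨t, hcos, hsin⟩ := exists_polar_angle (x 0) (x 1)
    have hρ : √(x 0 ^ 2 + x 1 ^ 2) = (cosh u)⁻¹ := by
      rw [cosh_artanh hx2_mem, neg_sq, one_div, inv_inv]
      congr 1
      linarith
    refine ⟨(t, u), (EuclideanSpace.eq_toLp_fin_three_iff _ _ _ _).mpr ?_ |>.symm⟩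
    refine ⟨?_, ?_, ?_⟩
    · rw [← hcos, hρ, div_eq_inv_mul]
    · rw [← hsin, hρ, div_eq_inv_mul]
    · rw [tanh_artanh hx2_mem, neg_neg]

/-- The image of the Gauss map of the catenoid is exactly the unit sphere minus the two
poles `(0,0,1)` and `(0,0,−1)`: the Gauss map of the catenoid omits exactly two
(antipodal) points of the sphere. -/
theorem catenoid_gauss_map_range :
    Set.range catG =
      {x : E3 | ‖x‖ = 1} \ {(WithLp.toLp 2 ![0, 0, 1] : E3), (WithLp.toLp 2 ![0, 0, -1] : E3)} := by
  rw [range_catG, sphere_diff_poles_eq]
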